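/- arXiv:2401.15374 — 4 statements merged into one kernel-verified Lean document; each statement's English description precedes it below -/
import Mathlib

section
/- For θ ∈ (0,π) and φ ∈ [0,π] with θ ≠ φ, the quaternionic matrix A = diag(e^{iθ}, e^{iφ}) is not strongly reversible in SL(2,ℍ): there is no matrix g ∈ SL(2,ℍ) with g² = I and gAg⁻¹ = A⁻¹. -/
/-- The quaternion `cos θ + (sin θ) i`, i.e. `e^{iθ}` inside the quaternions. -/
noncomputable def eI (θ : ℝ) : Quaternion ℝ := ⟨Real.cos θ, Real.sin θ, 0, 0⟩

/-- The quaternion unit `j`. -/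
def qj : Quaternion ℝ := ⟨0, 0, 1, 0⟩

/-- The standard complex embedding `Φ` of a 2×2 quaternionic matrix `A = A₁ + A₂ j`
as the 4×4 complex block matrix `[[A₁, A₂], [-conj A₂, conj A₁]]`. -/
noncomputable def Phi (A : Matrix (Fin 2) (Fin 2) (Quaternion ℝ)) :
    Matrix (Fin 2 ⊕ Fin 2) (Fin 2 ⊕ Fin 2) ℂ :=
  Matrix.fromBlocks
    (A.map fun q => (⟨q.re, q.imI⟩ : ℂ))
    (A.map fun q => (⟨q.imJ, q.imK⟩ : ℂ))
    (-(A.map fun q => (⟨q.imJ, -q.imK⟩ : ℂ)))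
    (A.map fun q => (⟨q.re, -q.imI⟩ : ℂ))

/-- The quaternionic determinant: the determinant of the complex embedding. -/
noncomputable def detH (A : Matrix (Fin 2) (Fin 2) (Quaternion ℝ)) : ℂ := (Phi A).det

/-!
Since `g = g⁻¹`, the relation `g A g = A⁻¹` becomes `A g A = g`, i.e. `e^{iθ_r} g_{rs} e^{iθ_s} = g_{rs}`
entrywise. Writing a quaternion as `z + w j` with `z, w ∈ ℂ`, the map `q ↦ e^{iα} q e^{iβ}` rotates `z`
by `α + β` and `w` by `α - β`. For the given angles, `2θ` and `θ ± φ` are not multiples of `2π`, so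
`g₀₁ = 0` and `g₀₀ ∈ ℝj + ℝk`. Then `(g²)₀₀ = g₀₀² = -|g₀₀|² ≠ 1`.
-/

open Real

lemma eq_zero_of_rotate_eq_self {t p r : ℝ} (ht : cos t ≠ 1)
    (h₁ : cos t * p - sin t * r = p) (h₂ : sin t * p + cos t * r = r) : p = 0 ∧ r = 0 := by
  have hpos : 0 < (1 - cos t) ^ 2 + sin t ^ 2 := by
    have : 0 < 1 - cos t := sub_pos.2 (lt_of_le_of_ne (cos_le_one t) ht)
    positivity
  have hp : ((1 - cos t) ^ 2 + sin t ^ 2) * p = 0 := by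
    linear_combination (cos t - 1) * h₁ + sin t * h₂
  have hr : ((1 - cos t) ^ 2 + sin t ^ 2) * r = 0 := by
    linear_combination -(sin t) * h₁ + (cos t - 1) * h₂
  exact ⟨(mul_eq_zero.1 hp).resolve_left hpos.ne', (mul_eq_zero.1 hr).resolve_left hpos.ne'⟩

lemma eI_re (θ : ℝ) : (eI θ).re = cos θ := rfl

lemma eI_imI (θ : ℝ) : (eI θ).imI = sin θ := rfl

lemma eI_imJ (θ : ℝ) : (eI θ).imJ = 0 := rfl

lemma eI_imK (θ : ℝ) : (eI θ).imK = 0 := rfl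

lemma eI_mul_mul_eI (α β : ℝ) (q : Quaternion ℝ) :
    eI α * q * eI β =
      ⟨cos (α + β) * q.re - sin (α + β) * q.imI, sin (α + β) * q.re + cos (α + β) * q.imI,
        cos (α - β) * q.imJ - sin (α - β) * q.imK, sin (α - β) * q.imJ + cos (α - β) * q.imK⟩ := by
  ext <;> simp only [Quaternion.re_mul, Quaternion.imI_mul, Quaternion.imJ_mul,
    Quaternion.imK_mul, eI_re, eI_imI, eI_imJ, eI_imK, cos_add, sin_add, cos_sub, sin_sub] <;> ring

section FixedByEI

variable {α β : ℝ} {q : Quaternion ℝ}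

lemma re_eq_zero_of_eI_mul_mul_eI_eq_self (h : eI α * q * eI β = q) (hc : cos (α + β) ≠ 1) :
    q.re = 0 ∧ q.imI = 0 := by
  rw [eI_mul_mul_eI] at h
  exact eq_zero_of_rotate_eq_self hc (congrArg (·.re) h) (congrArg (·.imI) h)

lemma imJ_eq_zero_of_eI_mul_mul_eI_eq_self (h : eI α * q * eI β = q) (hc : cos (α - β) ≠ 1) :
    q.imJ = 0 ∧ q.imK = 0 := by
  rw [eI_mul_mul_eI] at h
  exact eq_zero_of_rotate_eq_self hc (congrArg (·.imJ) h) (congrArg (·.imK) h)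

lemma eq_zero_of_eI_mul_mul_eI_eq_self (h : eI α * q * eI β = q) (hadd : cos (α + β) ≠ 1)
    (hsub : cos (α - β) ≠ 1) : q = 0 := by
  obtain ⟨h₁, h₂⟩ := re_eq_zero_of_eI_mul_mul_eI_eq_self h hadd
  obtain ⟨h₃, h₄⟩ := imJ_eq_zero_of_eI_mul_mul_eI_eq_self h hsub
  ext <;> assumption

end FixedByEI

lemma Quaternion.mul_self_ne_one_of_re_eq_zero_of_imI_eq_zero {q : Quaternion ℝ} (hre : q.re = 0)
    (hi : q.imI = 0) : q * q ≠ 1 := by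
  intro h
  have := congrArg (·.re) h
  simp only [Quaternion.re_mul, Quaternion.re_one, hre, hi] at this
  nlinarith [sq_nonneg q.imJ, sq_nonneg q.imK]

lemma mul_mul_eq_of_mul_mul_eq_inv {M : Type*} [Monoid M] {g a b : M} (hgg : g * g = 1)
    (hba : b * a = 1) (hconj : g * a * g = b) : a * g * a = g :=
  calc a * g * a = g * (g * a * g) * a := by simp only [← mul_assoc, hgg, one_mul]
    _ = g := by rw [hconj, mul_assoc, hba, mul_one]

lemma cos_ne_one_of_lt_of_lt {t : ℝ} (h₁ : -(2 * π) < t) (h₂ : t < 2 * π) (ht : t ≠ 0) :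
    cos t ≠ 1 :=
  fun h => ht ((cos_eq_one_iff_of_lt_of_lt h₁ h₂).1 h)

/-- diag(e^{iθ}, e^{iφ}) with θ ∈ (0,π), φ ∈ [0,π], θ ≠ φ is not strongly reversible in
SL(2,ℍ): no involution g in SL(2,ℍ) (so g⁻¹ = g) conjugates it to its inverse. -/
theorem not_strongly_reversible_diag (θ φ : ℝ)
    (hθ : θ ∈ Set.Ioo 0 Real.pi) (hφ : φ ∈ Set.Icc 0 Real.pi) (hne : θ ≠ φ) :
    ¬ ∃ g B : Matrix (Fin 2) (Fin 2) (Quaternion ℝ),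
        detH g = 1 ∧ g * g = 1 ∧
        !![eI θ, 0; 0, eI φ] * B = 1 ∧ B * !![eI θ, 0; 0, eI φ] = 1 ∧
        g * !![eI θ, 0; 0, eI φ] * g = B := by
  obtain ⟨hθ₀, hθπ⟩ := hθ
  obtain ⟨hφ₀, hφπ⟩ := hφ
  rintro ⟨g, B, -, hgg, -, hBA, hconj⟩
  have hfix : Matrix.diagonal ![eI θ, eI φ] * g * Matrix.diagonal ![eI θ, eI φ] = g := by
    rw [Matrix.diagonal_vec2]
    exact mul_mul_eq_of_mul_mul_eq_inv hgg hBA hconj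
  have h₀₀ : eI θ * g 0 0 * eI θ = g 0 0 := by
    simpa [Matrix.diagonal_mul, Matrix.mul_diagonal] using congrFun₂ hfix 0 0
  have h₀₁ : eI θ * g 0 1 * eI φ = g 0 1 := by
    simpa [Matrix.diagonal_mul, Matrix.mul_diagonal] using congrFun₂ hfix 0 1
  obtain ⟨hre, hi⟩ := re_eq_zero_of_eI_mul_mul_eI_eq_self h₀₀
    (cos_ne_one_of_lt_of_lt (by linarith) (by linarith) (by linarith))
  have hg₀₁ : g 0 1 = 0 := eq_zero_of_eI_mul_mul_eI_eq_self h₀₁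
    (cos_ne_one_of_lt_of_lt (by linarith) (by linarith) (by linarith))
    (cos_ne_one_of_lt_of_lt (by linarith) (by linarith) (sub_ne_zero.2 hne))
  refine Quaternion.mul_self_ne_one_of_re_eq_zero_of_imI_eq_zero hre hi ?_
  simpa [Matrix.mul_apply, Fin.sum_univ_two, hg₀₁] using congrFun (congrFun hgg 0) 0
end

section
/- For θ ∈ [0,π], the quaternionic matrix g = diag(-(e^{-2iθ})j, j) satisfies g·A·g⁻¹ = A⁻¹, where A = [[e^{iθ}, 1],[0, e^{iθ}]]. Hence the parabolic representative A is reversible in SL(2,ℍ). -/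
/-!
The only facts about `ℍ` used are that `w = e^{-iθ}` is a two-sided inverse of `z = e^{iθ}` and
that `j` is a square root of `-1` with `j z = w j`. In any ring these relations already force
`[[z,1],[0,z]]⁻¹ = [[w,-w²],[0,w]]`, `g² = -1` for `g = diag(-w²j, j)`, so `g⁻¹ = -g`, and
`g [[z,1],[0,z]] g⁻¹ = [[w,-w²],[0,w]]`.
-/

open Matrix Quaternion

theorem Matrix.neg_fin_two {α : Type*} [Neg α] (a b c d : α) :
    -!![a, b; c, d] = !![-a, -b; -c, -d] := by
  ext i j
  fin_cases i <;> fin_cases j <;> rfl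

theorem mul_eq_mul_swap_of_mul_self_eq_neg_one {R : Type*} [Ring R] {j z w : R}
    (hjj : j * j = -1) (hj : j * z = w * j) : j * w = z * j :=
  calc j * w = -(j * w * (j * j)) := by rw [hjj, mul_neg_one, neg_neg]
    _ = -(j * (w * j) * j) := by simp only [mul_assoc]
    _ = -(j * (j * z) * j) := by rw [hj]
    _ = -(j * j * z * j) := by simp only [mul_assoc]
    _ = z * j := by rw [hjj, neg_one_mul, neg_mul, neg_neg]

theorem jordanBlock_reversible {R : Type*} [Ring R] {z w j : R}
    (hzw : z * w = 1) (hwz : w * z = 1) (hjj : j * j = -1) (hj : j * z = w * j) :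
    !![z, 1; 0, z] * !![w, -(w * w); 0, w] = 1 ∧
      !![w, -(w * w); 0, w] * !![z, 1; 0, z] = 1 ∧
      !![-(w * w * j), 0; 0, j] * !![-(w * w * j), 0; 0, j] = -1 ∧
      !![-(w * w * j), 0; 0, j] * !![z, 1; 0, z] * -!![-(w * w * j), 0; 0, j] =
        !![w, -(w * w); 0, w] := by
  have hjw := mul_eq_mul_swap_of_mul_self_eq_neg_one hjj hj
  -- right-associated forms of the relations, so that `simp` can normalize products
  have hzw' (x : R) : z * (w * x) = x := by rw [← mul_assoc, hzw, one_mul]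
  have hwz' (x : R) : w * (z * x) = x := by rw [← mul_assoc, hwz, one_mul]
  have hj' (x : R) : j * (z * x) = w * (j * x) := by rw [← mul_assoc, hj, mul_assoc]
  have hjw' (x : R) : j * (w * x) = z * (j * x) := by rw [← mul_assoc, hjw, mul_assoc]
  refine ⟨?_, ?_, ?_, ?_⟩
  · rw [mul_fin_two, one_fin_two]
    simp [hzw, hzw']
  · rw [mul_fin_two, one_fin_two]
    simp [mul_assoc, hwz]
  · rw [mul_fin_two, one_fin_two, neg_fin_two]
    simp [mul_assoc, hjw', hjj, hwz', hwz]
  · rw [mul_fin_two, neg_fin_two, mul_fin_two]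
    simp [mul_assoc, hjw', hjj, hzw', hwz, hj']

theorem eI_add (a b : ℝ) : eI (a + b) = eI a * eI b := by
  ext <;> simp only [re_mul, imI_mul, imJ_mul, imK_mul] <;>
    simp [eI, Real.cos_add, Real.sin_add]
  ring

theorem eI_zero : eI 0 = 1 := by
  ext <;> simp [eI]

theorem eI_mul_eI_neg (a : ℝ) : eI a * eI (-a) = 1 := by
  rw [← eI_add, add_neg_cancel, eI_zero]

theorem qj_mul_qj : qj * qj = -1 := by
  ext <;> simp only [re_mul, imI_mul, imJ_mul, imK_mul] <;> simp [qj]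

theorem qj_mul_eI (a : ℝ) : qj * eI a = eI (-a) * qj := by
  ext <;> simp only [re_mul, imI_mul, imJ_mul, imK_mul] <;> simp [eI, qj]

theorem parabolic_reversible_general (θ : ℝ) :
    !![eI θ, 1; 0, eI θ] * !![eI (-θ), -(eI (-(2*θ))); 0, eI (-θ)] = 1 ∧
      !![eI (-θ), -(eI (-(2*θ))); 0, eI (-θ)] * !![eI θ, 1; 0, eI θ] = 1 ∧
      !![-(eI (-(2*θ)) * qj), 0; 0, qj] * !![-(eI (-(2*θ)) * qj), 0; 0, qj] = -1 ∧
      !![-(eI (-(2*θ)) * qj), 0; 0, qj] * !![eI θ, 1; 0, eI θ] *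
          (-(!![-(eI (-(2*θ)) * qj), 0; 0, qj])) =
        !![eI (-θ), -(eI (-(2*θ))); 0, eI (-θ)] := by
  have h2θ : eI (-(2 * θ)) = eI (-θ) * eI (-θ) := by rw [← eI_add]; ring_nf
  rw [h2θ]
  exact jordanBlock_reversible (eI_mul_eI_neg θ) (by simpa using eI_mul_eI_neg (-θ)) qj_mul_qj
    (qj_mul_eI θ)

/-- g = diag(-(e^{-2iθ})j, j) conjugates the parabolic A = [[e^{iθ},1],[0,e^{iθ}]] to
A⁻¹ = [[e^{-iθ}, -e^{-2iθ}],[0,e^{-iθ}]] (here g² = -1, so g⁻¹ = -g): A is reversible. -/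
theorem parabolic_reversible (θ : ℝ) (hθ : θ ∈ Set.Icc 0 Real.pi) :
    !![eI θ, 1; 0, eI θ] * !![eI (-θ), -(eI (-(2*θ))); 0, eI (-θ)] = 1 ∧
      !![eI (-θ), -(eI (-(2*θ))); 0, eI (-θ)] * !![eI θ, 1; 0, eI θ] = 1 ∧
      !![-(eI (-(2*θ)) * qj), 0; 0, qj] * !![-(eI (-(2*θ)) * qj), 0; 0, qj] = -1 ∧
      !![-(eI (-(2*θ)) * qj), 0; 0, qj] * !![eI θ, 1; 0, eI θ] *
          (-(!![-(eI (-(2*θ)) * qj), 0; 0, qj])) =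
        !![eI (-θ), -(eI (-(2*θ))); 0, eI (-θ)] :=
  parabolic_reversible_general θ
end

section
/- If A ∈ SL(2,ℍ) satisfies A² = -I (the 2×2 identity matrix negated), then A is conjugate in GL(2,ℍ) to the real matrix [[0, 1],[-1, 0]]. -/
/-!
Since `A² = -1`, for every column `v` the matrix `P = [v | -A v]` satisfies `A P = P J` with
`J = !![0, 1; -1, 0]`, so it suffices to make `P` invertible. For `v = (1, q)` the LDU
factorisation shows that `P` is invertible once its Schur complement
`s(q) = q (a + b q) - (c + d q)` is nonzero. If `s` vanished identically, `q = 0, ±1` would force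
`c = b = 0` and `d = a`, and then `s ≡ 0` says that `a` is central in `ℍ`, hence real,
contradicting `a² = -1`.
-/

open Quaternion

theorem exists_conj_eq_of_isUnit {M : Type*} [Monoid M] {A J P : M} (hP : IsUnit P)
    (h : A * P = P * J) : ∃ g gi : M, g * gi = 1 ∧ gi * g = 1 ∧ g * A * gi = J := by
  obtain ⟨u, rfl⟩ := hP
  exact ⟨↑u⁻¹, u, u.inv_mul, u.mul_inv, by rw [mul_assoc, h, ← mul_assoc, u.inv_mul, one_mul]⟩

namespace Matrix

section Ring

variable {R : Type*} [Ring R]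

theorem isUnit_lowerUnitriangular_fin_two (q : R) : IsUnit !![1, 0; q, 1] :=
  ⟨⟨_, !![1, 0; -q, 1], by simp [one_fin_two], by simp [one_fin_two]⟩, rfl⟩

theorem isUnit_upperUnitriangular_fin_two (x : R) : IsUnit !![1, x; 0, 1] :=
  ⟨⟨_, !![1, -x; 0, 1], by simp [one_fin_two], by simp [one_fin_two]⟩, rfl⟩

theorem isUnit_diagonal_one_fin_two {s : R} (hs : IsUnit s) : IsUnit !![1, 0; 0, s] := by
  obtain ⟨u, rfl⟩ := hs
  exact ⟨⟨_, !![1, 0; 0, ↑u⁻¹], by simp [one_fin_two], by simp [one_fin_two]⟩, rfl⟩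

theorem isUnit_fin_two_of_isUnit_schur {x q y : R} (hs : IsUnit (y - q * x)) :
    IsUnit !![1, x; q, y] := by
  have hLDU : !![1, x; q, y] = !![1, 0; q, 1] * !![1, 0; 0, y - q * x] * !![1, x; 0, 1] := by
    simp
  rw [hLDU]
  exact ((isUnit_lowerUnitriangular_fin_two q).mul (isUnit_diagonal_one_fin_two hs)).mul
    (isUnit_upperUnitriangular_fin_two x)

theorem mul_self_fin_two_eq_neg_one_iff {a b c d : R} :
    !![a, b; c, d] * !![a, b; c, d] = -1 ↔
      a * a + b * c = -1 ∧ a * b + b * d = 0 ∧ c * a + d * c = 0 ∧ c * b + d * d = -1 := by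
  simp [one_fin_two, and_assoc]

theorem fin_two_mul_eq_mul_of_mul_self_eq_neg_one {a b c d : R}
    (h : !![a, b; c, d] * !![a, b; c, d] = -1) (q : R) :
    !![a, b; c, d] * !![1, -(a + b * q); q, -(c + d * q)] =
      !![1, -(a + b * q); q, -(c + d * q)] * !![0, 1; -1, 0] := by
  obtain ⟨h₁₁, h₁₂, h₂₁, h₂₂⟩ := mul_self_fin_two_eq_neg_one_iff.1 h
  have e₁ : a * -(a + b * q) + b * -(c + d * q) = 1 := by
    calc _ = -((a * a + b * c) + (a * b + b * d) * q) := by noncomm_ring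
      _ = 1 := by rw [h₁₁, h₁₂]; noncomm_ring
  have e₂ : c * -(a + b * q) + d * -(c + d * q) = q := by
    calc _ = -((c * a + d * c) + (c * b + d * d) * q) := by noncomm_ring
      _ = q := by rw [h₂₁, h₂₂]; noncomm_ring
  rw [mul_fin_two, mul_fin_two, e₁, e₂]
  simp

end Ring

section DivisionRing

variable {D : Type*} [DivisionRing D] [CharZero D]

theorem exists_schur_ne_zero_of_mul_self_eq_neg_one (hD : ∀ z ∈ Set.center D, z * z ≠ -1)
    {a b c d : D} (h : !![a, b; c, d] * !![a, b; c, d] = -1) :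
    ∃ q : D, -(c + d * q) - q * -(a + b * q) ≠ 0 := by
  obtain ⟨h₁₁, -⟩ := mul_self_fin_two_eq_neg_one_iff.1 h
  by_contra! hq
  have hc : c = 0 := by simpa using hq 0
  have hb : b = 0 := by
    have h2b : (2 : D) * b = 0 := by
      calc _ = (-(c + d * 1) - 1 * -(a + b * 1)) + (-(c + d * -1) - -1 * -(a + b * -1))
            + 2 * c := by noncomm_ring
        _ = 0 := by rw [hq, hq, hc]; simp
    exact (mul_eq_zero.1 h2b).resolve_left two_ne_zero
  subst hb hc
  have hd : d = a := by simpa [neg_add_eq_zero] using hq 1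
  subst hd
  refine hD d (Semigroup.mem_center_iff.2 fun g => ?_) (by simpa using h₁₁)
  simpa [neg_add_eq_zero, eq_comm] using hq g

theorem exists_conj_eq_of_mul_self_eq_neg_one (hD : ∀ z ∈ Set.center D, z * z ≠ -1)
    (A : Matrix (Fin 2) (Fin 2) D) (hA : A * A = -1) :
    ∃ g gi : Matrix (Fin 2) (Fin 2) D,
      g * gi = 1 ∧ gi * g = 1 ∧ g * A * gi = !![0, 1; -1, 0] := by
  obtain ⟨a, b, c, d, rfl⟩ : ∃ a b c d, A = !![a, b; c, d] := ⟨_, _, _, _, eta_fin_two A⟩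
  obtain ⟨q, hq⟩ := exists_schur_ne_zero_of_mul_self_eq_neg_one hD hA
  exact exists_conj_eq_of_isUnit (isUnit_fin_two_of_isUnit_schur hq.isUnit)
    (fin_two_mul_eq_mul_of_mul_self_eq_neg_one hA q)

end DivisionRing

end Matrix

instance Quaternion.instCharZero : CharZero ℍ[ℝ] :=
  charZero_of_injective_algebraMap (algebraMap ℝ ℍ[ℝ]).injective

theorem Quaternion.mul_self_ne_neg_one_of_mem_center {z : ℍ[ℝ]} (hz : z ∈ Set.center ℍ[ℝ]) :
    z * z ≠ -1 := by
  -- A bare literal `⟨0, 1, 0, 0⟩` would not be seen by the `Quaternion` simp lemmas.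
  obtain ⟨i, hi⟩ : ∃ i : ℍ[ℝ], i.re = 0 ∧ i.imI = 1 ∧ i.imJ = 0 ∧ i.imK = 0 :=
    ⟨⟨0, 1, 0, 0⟩, rfl, rfl, rfl, rfl⟩
  obtain ⟨j, hj⟩ : ∃ j : ℍ[ℝ], j.re = 0 ∧ j.imI = 0 ∧ j.imJ = 1 ∧ j.imK = 0 :=
    ⟨⟨0, 0, 1, 0⟩, rfl, rfl, rfl, rfl⟩
  have hzi := Semigroup.mem_center_iff.1 hz i
  have hzj := Semigroup.mem_center_iff.1 hz j
  intro h
  simp [Quaternion.ext_iff, hi, hj] at hzi hzj h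
  nlinarith

theorem skew_involution_conjugate_general (A : Matrix (Fin 2) (Fin 2) (Quaternion ℝ))
    (hA : A * A = -1) :
    ∃ g gi : Matrix (Fin 2) (Fin 2) (Quaternion ℝ),
      g * gi = 1 ∧ gi * g = 1 ∧ g * A * gi = !![0, 1; -1, 0] :=
  Matrix.exists_conj_eq_of_mul_self_eq_neg_one
    (fun _ => Quaternion.mul_self_ne_neg_one_of_mem_center) A hA

/-- Any A ∈ SL(2,ℍ) with A² = -I is conjugate in GL(2,ℍ) to [[0,1],[-1,0]]. -/
theorem skew_involution_conjugate (A : Matrix (Fin 2) (Fin 2) (Quaternion ℝ))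
    (hdet : detH A = 1) (hA : A * A = -1) :
    ∃ g gi : Matrix (Fin 2) (Fin 2) (Quaternion ℝ),
      g * gi = 1 ∧ gi * g = 1 ∧ g * A * gi = !![0, 1; -1, 0] :=
  skew_involution_conjugate_general A hA
end

section
/- Let r > 0, r ≠ 1, and θ, φ ∈ [0,π] with θ ≠ φ and θ ≠ π - φ. Then for A = diag(r·e^{iθ}, r⁻¹·e^{iφ}) ∈ SL(2,ℍ), the coefficients c₁ = 2(r⁻¹cos θ + r cos φ) and c₃ = 2(r cos θ + r⁻¹ cos φ) of the characteristic polynomial of Φ(A) satisfy c₁² ≠ c₃². -/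
theorem c1_sq_ne_c3_sq (r θ φ : ℝ) (hr : 0 < r) (hr1 : r ≠ 1)
    (hθ : θ ∈ Set.Icc 0 Real.pi) (hφ : φ ∈ Set.Icc 0 Real.pi)
    (h1 : θ ≠ φ) (h2 : θ ≠ Real.pi - φ) :
    (2 * (r⁻¹ * Real.cos θ + r * Real.cos φ)) ^ 2 ≠
      (2 * (r * Real.cos θ + r⁻¹ * Real.cos φ)) ^ 2 := by
  intro h
  have hr0 : r ≠ 0 := ne_of_gt hr
  have hrr : r⁻¹ - r ≠ 0 := by
    intro hc
    have : r⁻¹ = r := by linarith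
    have : r * r = 1 := by field_simp at this; linarith
    have : (r - 1) * (r + 1) = 0 := by nlinarith
    rcases mul_eq_zero.mp this with h' | h'
    · exact hr1 (by linarith)
    · linarith
  have hcos1 : Real.cos θ - Real.cos φ ≠ 0 := by
    intro hc
    exact h1 (Real.injOn_cos hθ hφ (by linarith))
  have hcos2 : Real.cos θ + Real.cos φ ≠ 0 := by
    intro hc
    apply h2
    apply Real.injOn_cos hθ ⟨by linarith [hφ.2], by linarith [hφ.1]⟩
    rw [Real.cos_pi_sub]; linarith
  have key : (2 * (r⁻¹ - r) * (Real.cos θ - Real.cos φ)) *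
      (2 * (r + r⁻¹) * (Real.cos θ + Real.cos φ)) = 0 := by
    linear_combination h
  rcases mul_eq_zero.mp key with h' | h' <;>
    rcases mul_eq_zero.mp h' with h'' | h''
  · rcases mul_eq_zero.mp h'' with h3 | h3
    · norm_num at h3
    · exact hrr h3
  · exact hcos1 h''
  · rcases mul_eq_zero.mp h'' with h3 | h3
    · norm_num at h3
    · have : 0 < r + r⁻¹ := by positivity
      linarith
  · exact hcos2 h''
end
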